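/- Let κ < 0, λ > 0 and let n ≥ 1 be an integer. If u₁ and u₂ are both S⁺ₙ-solutions of problem (P) for the same parameters (κ, λ), then u₁(x) = u₂(x) for all x ∈ [0,1]. -/

import Mathlib

open Set Real Filter

noncomputable section

/-- `u` is twice continuously differentiable on `[a,b]`, satisfies
`1 + κ (u')² > 0` and the ODE `-u'' = λ u (1 + κ (u')²)^(3/2)` on `[a,b]`. -/
def SolODE (κ lam : ℝ) (u : ℝ → ℝ) (a b : ℝ) : Prop :=
  (∀ x ∈ Set.Icc a b, DifferentiableAt ℝ u x) ∧
  (∀ x ∈ Set.Icc a b, DifferentiableAt ℝ (deriv u) x) ∧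
  ContinuousOn (deriv (deriv u)) (Set.Icc a b) ∧
  (∀ x ∈ Set.Icc a b, 0 < 1 + κ * (deriv u x) ^ 2) ∧
  (∀ x ∈ Set.Icc a b,
    -(deriv (deriv u) x) = lam * u x * (1 + κ * (deriv u x) ^ 2) ^ ((3 : ℝ) / 2))

/-- `u` is a solution of problem (P) on `[0,1]` with Dirichlet boundary conditions. -/
def SolP (κ lam : ℝ) (u : ℝ → ℝ) : Prop :=
  SolODE κ lam u 0 1 ∧ u 0 = 0 ∧ u 1 = 0

/-- `u` is an `S⁺ₙ`-solution of problem (P): a nontrivial solution with exactly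
`n - 1` zeros in `(0,1)`, all zeros in `[0,1]` simple, and positive near `0`. -/
def SPlus (κ lam : ℝ) (n : ℕ) (u : ℝ → ℝ) : Prop :=
  SolP κ lam u ∧
  (∃ x ∈ Set.Icc (0 : ℝ) 1, u x ≠ 0) ∧
  {x ∈ Set.Ioo (0 : ℝ) 1 | u x = 0}.ncard = n - 1 ∧
  (∀ τ ∈ Set.Icc (0 : ℝ) 1, u τ = 0 → deriv u τ ≠ 0) ∧
  (∃ δ > 0, ∀ x ∈ Set.Ioo (0 : ℝ) δ, 0 < u x)

/-- The constant `B = ∫₀¹ dθ/√(θ⁻⁴ - 1)`. -/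
def Bconst : ℝ := ∫ θ in (0 : ℝ)..1, 1 / Real.sqrt ((θ ^ 4)⁻¹ - 1)

/-- The sup-norm of `u` over `[0,1]`. -/
def supNorm (u : ℝ → ℝ) : ℝ := sSup ((fun x => |u x|) '' Set.Icc (0 : ℝ) 1)

/-- The time map `J(λ, ξ) = √(-κ) ∫₀¹ ξ/√(1 - (1 - λκξ²(1-θ²)/2)⁻²) dθ`. -/
def Jmap (κ lam ξ : ℝ) : ℝ :=
  Real.sqrt (-κ) *
    ∫ θ in (0 : ℝ)..1,
      ξ / Real.sqrt (1 - ((1 - lam * κ / 2 * ξ ^ 2 * (1 - θ ^ 2))⁻¹) ^ 2)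

open Topology MeasureTheory

/-!
Along a solution the energy `(1 + κ u'²)^(-1/2) - κ λ u² / 2` is conserved, and `(u, u')`
solves a first-order system whose field is `C¹` where `1 + κ v² > 0`, so a solution is
determined by `(u, u')` at one point. Hence an `S⁺ₙ`-solution is symmetric about its first
critical point `T` and antiperiodic with antiperiod `2T`, and counting its zeros gives
`T = 1/(2n)`. On `[0, T)` the energy identity gives `dx/dθ = G(C, θ)` for `θ = u / u(T)`, where
`C > 1` is the energy and `G` is strictly increasing in `C`. So `T = ∫₀^{1⁻} G(C, θ) dθ`
determines `C`, hence `u'(0)`, hence `u`.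
-/

theorem ODE_solution_unique_of_contDiffOn {E : Type*} [NormedAddCommGroup E] [NormedSpace ℝ E]
    {v : E → E} {U : Set E} (hU : IsOpen U) (hv : ContDiffOn ℝ 1 v U) {f g : ℝ → E}
    {a b t₀ : ℝ} (hf : ∀ t ∈ Icc a b, HasDerivAt f (v (f t)) t ∧ f t ∈ U)
    (hg : ∀ t ∈ Icc a b, HasDerivAt g (v (g t)) t ∧ g t ∈ U) (ht₀ : t₀ ∈ Icc a b)
    (heq : f t₀ = g t₀) : EqOn f g (Icc a b) := by
  set K := f '' Icc a b ∪ g '' Icc a b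
  have hfc : ContinuousOn f (Icc a b) := fun t ht ↦ (hf t ht).1.continuousAt.continuousWithinAt
  have hgc : ContinuousOn g (Icc a b) := fun t ht ↦ (hg t ht).1.continuousAt.continuousWithinAt
  have hK : IsCompact K := (isCompact_Icc.image_of_continuousOn hfc).union
    (isCompact_Icc.image_of_continuousOn hgc)
  have hKU : K ⊆ U := union_subset (image_subset_iff.2 fun t ht ↦ (hf t ht).2)
    (image_subset_iff.2 fun t ht ↦ (hg t ht).2)
  obtain ⟨L, hL⟩ : ∃ L, LipschitzOnWith L v K := by
    refine LocallyLipschitzOn.exists_lipschitzOnWith_of_compact hK fun x hx ↦ ?_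
    obtain ⟨L, s, hs, hLs⟩ :=
      ((hv x (hKU hx)).contDiffAt (hU.mem_nhds (hKU hx))).exists_lipschitzOnWith
    exact ⟨L, s, mem_nhdsWithin_of_mem_nhds hs, hLs⟩
  have hfK : ∀ t ∈ Icc a b, f t ∈ K := fun t ht ↦ Or.inl (mem_image_of_mem f ht)
  have hgK : ∀ t ∈ Icc a b, g t ∈ K := fun t ht ↦ Or.inr (mem_image_of_mem g ht)
  have hleft : EqOn f g (Icc a t₀) :=
    ODE_solution_unique_of_mem_Icc_left (v := fun _ ↦ v) (s := fun _ ↦ K) (fun _ _ ↦ hL)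
      (hfc.mono (Icc_subset_Icc_right ht₀.2))
      (fun t ht ↦ (hf t ⟨ht.1.le, ht.2.trans ht₀.2⟩).1.hasDerivWithinAt)
      (fun t ht ↦ hfK t ⟨ht.1.le, ht.2.trans ht₀.2⟩)
      (hgc.mono (Icc_subset_Icc_right ht₀.2))
      (fun t ht ↦ (hg t ⟨ht.1.le, ht.2.trans ht₀.2⟩).1.hasDerivWithinAt)
      (fun t ht ↦ hgK t ⟨ht.1.le, ht.2.trans ht₀.2⟩) heq
  have hright : EqOn f g (Icc t₀ b) :=
    ODE_solution_unique_of_mem_Icc_right (v := fun _ ↦ v) (s := fun _ ↦ K) (fun _ _ ↦ hL)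
      (hfc.mono (Icc_subset_Icc_left ht₀.1))
      (fun t ht ↦ (hf t ⟨ht₀.1.trans ht.1, ht.2.le⟩).1.hasDerivWithinAt)
      (fun t ht ↦ hfK t ⟨ht₀.1.trans ht.1, ht.2.le⟩)
      (hgc.mono (Icc_subset_Icc_left ht₀.1))
      (fun t ht ↦ (hg t ⟨ht₀.1.trans ht.1, ht.2.le⟩).1.hasDerivWithinAt)
      (fun t ht ↦ hgK t ⟨ht₀.1.trans ht.1, ht.2.le⟩) heq
  rw [← Icc_union_Icc_eq_Icc ht₀.1 ht₀.2]
  exact hleft.union hright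

theorem HasDerivAt.nonneg_of_eventually_le {f : ℝ → ℝ} {f' a : ℝ} (hf : HasDerivAt f f' a)
    (hle : ∀ᶠ x in 𝓝[>] a, f a ≤ f x) : 0 ≤ f' := by
  have hslope : Tendsto (slope f a) (𝓝[>] a) (𝓝 f') :=
    (hasDerivAt_iff_tendsto_slope.1 hf).mono_left (nhdsWithin_mono a fun x hx ↦ ne_of_gt hx)
  refine ge_of_tendsto hslope ?_
  filter_upwards [hle, self_mem_nhdsWithin] with x hx hax
  rw [slope_def_field]
  exact div_nonneg (sub_nonneg.2 hx) (sub_nonneg.2 (le_of_lt hax))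

theorem exists_first_zero {f : ℝ → ℝ} {a b : ℝ} (hf : ContinuousOn f (Icc a b))
    (ha : 0 < f a) (hb : ∃ x ∈ Icc a b, f x ≤ 0) :
    ∃ z ∈ Ioc a b, f z = 0 ∧ ∀ x ∈ Ico a z, 0 < f x := by
  set S := {x ∈ Icc a b | f x ≤ 0}
  have hS : IsClosed S := hf.preimage_isClosed_of_isClosed isClosed_Icc isClosed_Iic
  have hSne : S.Nonempty := hb
  have hSbdd : BddBelow S := ⟨a, fun x hx ↦ hx.1.1⟩
  obtain ⟨⟨haz, hzb⟩, hz⟩ : sInf S ∈ S := hS.csInf_mem hSne hSbdd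
  have hpos : ∀ x ∈ Ico a (sInf S), 0 < f x := fun x hx ↦ by
    by_contra! h
    exact (csInf_le hSbdd ⟨⟨hx.1, hx.2.le.trans hzb⟩, h⟩).not_gt hx.2
  have hza : a < sInf S := lt_of_le_of_ne haz fun h ↦ (h ▸ hz).not_gt ha
  refine ⟨sInf S, ⟨hza, hzb⟩, ?_, hpos⟩
  obtain ⟨y, hy, hfy⟩ := intermediate_value_Icc' haz (hf.mono (Icc_subset_Icc_right hzb))
    ⟨hz, ha.le⟩
  rcases hy.2.lt_or_eq with hlt | rfl
  · exact absurd hfy (hpos y ⟨hy.1, hlt⟩).ne'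
  · exact hfy

theorem eq_neg_one_pow_mul_of_antiperiodic {u : ℝ → ℝ} {P b : ℝ} (hP : 0 ≤ P)
    (hanti : ∀ x ∈ Icc P b, u x = -u (x - P)) (j : ℕ) :
    ∀ x ∈ Icc (j * P) b, u x = (-1) ^ j * u (x - j * P) := by
  induction j with
  | zero => simp
  | succ j ih =>
    intro x hx
    push_cast at hx
    have hjP : 0 ≤ j * P := mul_nonneg j.cast_nonneg hP
    rw [ih x ⟨by linarith [hx.1], hx.2⟩,
      hanti (x - j * P) ⟨by linarith [hx.1], by linarith [hx.2]⟩]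
    push_cast
    ring_nf

theorem zero_iff_of_antiperiodic {u : ℝ → ℝ} {P b : ℝ} (hP : 0 < P) (h0 : u 0 = 0)
    (hpos : ∀ x ∈ Ioo 0 P, 0 < u x) (hanti : ∀ x ∈ Icc P b, u x = -u (x - P)) {x : ℝ}
    (hx : x ∈ Icc 0 b) : u x = 0 ↔ ∃ j : ℕ, x = j * P := by
  constructor
  · intro hux
    set j := ⌊x / P⌋₊
    have hjx : j * P ≤ x := (le_div_iff₀ hP).1 (Nat.floor_le (div_nonneg hx.1 hP.le))
    have hxj : x - j * P < P := by
      have := (div_lt_iff₀ hP).1 (Nat.lt_floor_add_one (x / P))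
      linarith
    refine ⟨j, ?_⟩
    by_contra hne
    have hrest := hpos (x - j * P) ⟨sub_pos.2 (lt_of_le_of_ne hjx (Ne.symm hne)), hxj⟩
    rw [eq_neg_one_pow_mul_of_antiperiodic hP.le hanti j x ⟨hjx, hx.2⟩] at hux
    exact (mul_ne_zero (pow_ne_zero _ (by norm_num)) hrest.ne') hux
  · rintro ⟨j, rfl⟩
    rw [eq_neg_one_pow_mul_of_antiperiodic hP.le hanti j _ ⟨le_rfl, hx.2⟩, sub_self, h0,
      mul_zero]

theorem antiperiod_eq_one_div_ncard_zeros_add_one {u : ℝ → ℝ} {P : ℝ} (hP : 0 < P)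
    (h0 : u 0 = 0) (h1 : u 1 = 0) (hpos : ∀ x ∈ Ioo 0 P, 0 < u x)
    (hanti : ∀ x ∈ Icc P 1, u x = -u (x - P)) :
    P = 1 / (({x ∈ Ioo (0 : ℝ) 1 | u x = 0}.ncard : ℝ) + 1) := by
  obtain ⟨m, hm⟩ := (zero_iff_of_antiperiodic hP h0 hpos hanti ⟨zero_le_one, le_rfl⟩).1 h1
  have hzeros : {x ∈ Ioo (0 : ℝ) 1 | u x = 0} = (fun j : ℕ ↦ j * P) '' Ioo 0 m := by
    ext x
    simp only [mem_ofPred_eq, mem_image, mem_Ioo]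
    constructor
    · rintro ⟨hx, hux⟩
      obtain ⟨j, rfl⟩ :=
        (zero_iff_of_antiperiodic hP h0 hpos hanti ⟨hx.1.le, hx.2.le⟩).1 hux
      refine ⟨j, ⟨?_, ?_⟩, rfl⟩
      · exact_mod_cast (pos_of_mul_pos_left hx.1 hP.le)
      · exact_mod_cast lt_of_mul_lt_mul_right (hm ▸ hx.2) hP.le
    · rintro ⟨j, ⟨hj0, hjm⟩, rfl⟩
      have hj0' : (0 : ℝ) < j := by exact_mod_cast hj0
      have hjm' : (j : ℝ) < m := by exact_mod_cast hjm
      refine ⟨⟨by positivity, hm ▸ mul_lt_mul_of_pos_right hjm' hP⟩, ?_⟩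
      exact (zero_iff_of_antiperiodic hP h0 hpos hanti
        ⟨by positivity, hm ▸ mul_le_mul_of_nonneg_right hjm'.le hP.le⟩).2 ⟨j, rfl⟩
  have hm0 : 0 < m := by
    rcases Nat.eq_zero_or_pos m with rfl | h
    · simp at hm
    · exact h
  have hinj : Function.Injective fun j : ℕ ↦ j * P := fun i j h ↦ by
    exact_mod_cast mul_right_cancel₀ hP.ne' h
  rw [hzeros, ncard_image_of_injective _ hinj, ncard_Ioo_nat, Nat.sub_zero, ← Nat.cast_add_one,
    Nat.sub_add_cancel hm0,
    eq_div_iff (by positivity)]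
  linarith

theorem isLUB_integral_of_comp_mul_deriv_eq_one {φ φ' G : ℝ → ℝ} {T : ℝ} (hT : 0 < T)
    (hφ : ∀ x ∈ Icc 0 T, HasDerivAt φ (φ' x) x) (hφ' : ContinuousOn φ' (Icc 0 T))
    (hmono : StrictMonoOn φ (Icc 0 T)) (h0 : φ 0 = 0) (h1 : φ T = 1)
    (hG : ContinuousOn G (Ico 0 1)) (hone : ∀ x ∈ Ico 0 T, G (φ x) * φ' x = 1) :
    IsLUB ((fun θ ↦ ∫ t in 0..θ, G t) '' Ico 0 1) T := by
  have hmaps : MapsTo φ (Ico 0 T) (Ico 0 1) := fun x hx ↦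
    ⟨h0 ▸ hmono.monotoneOn ⟨le_rfl, hT.le⟩ (Ico_subset_Icc_self hx) hx.1,
      h1 ▸ hmono (Ico_subset_Icc_self hx) ⟨hT.le, le_rfl⟩ hx.2⟩
  have htime : ∀ x ∈ Ico 0 T, ∫ t in 0..φ x, G t = x := by
    intro x hx
    have hsub : Icc 0 x ⊆ Ico 0 T := Icc_subset_Ico_right hx.2
    rw [← uIcc_of_le hx.1] at hsub
    have hcov := intervalIntegral.integral_comp_mul_deriv' (g := G)
      (fun y hy ↦ hφ y (Ico_subset_Icc_self (hsub hy)))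
      (hφ'.mono (hsub.trans Ico_subset_Icc_self)) (hG.mono ((hmaps.mono_left hsub).image_subset))
    rw [h0] at hcov
    rw [← hcov, intervalIntegral.integral_congr (f := fun y ↦ (G ∘ φ) y * φ' y)
      (g := fun _ ↦ 1) fun y hy ↦ hone y (hsub hy)]
    simp
  refine ⟨?_, fun b hb ↦ le_of_forall_lt_imp_le_of_dense fun x hx ↦ ?_⟩
  · rintro _ ⟨θ, hθ, rfl⟩
    obtain ⟨x, hx, rfl⟩ := intermediate_value_Ico hT.le
      (fun y hy ↦ (hφ y hy).continuousAt.continuousWithinAt) (h0 ▸ h1 ▸ hθ)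
    exact (htime x hx).le.trans hx.2.le
  · have hx' : max x 0 ∈ Ico 0 T := ⟨le_max_right _ _, max_lt hx hT⟩
    calc x ≤ max x 0 := le_max_left _ _
      _ = ∫ t in 0..φ (max x 0), G t := (htime _ hx').symm
      _ ≤ b := hb ⟨_, hmaps hx', rfl⟩

theorem lt_of_isLUB_integral {G₁ G₂ : ℝ → ℝ} {T₁ T₂ : ℝ}
    (hG₁ : ContinuousOn G₁ (Ico 0 1)) (hG₂ : ContinuousOn G₂ (Ico 0 1))
    (hnonneg : ∀ θ ∈ Ico 0 1, 0 ≤ G₁ θ)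
    (hlt : ∀ θ ∈ Ico 0 1, G₁ θ < G₂ θ)
    (hT₁ : IsLUB ((fun θ ↦ ∫ t in 0..θ, G₁ t) '' Ico 0 1) T₁)
    (hT₂ : IsLUB ((fun θ ↦ ∫ t in 0..θ, G₂ t) '' Ico 0 1) T₂) : T₁ < T₂ := by
  have hint : ∀ {G : ℝ → ℝ}, ContinuousOn G (Ico 0 1) →
      ∀ {a b : ℝ}, 0 ≤ a → a ≤ b → b < 1 → IntervalIntegrable G volume a b :=
    fun hG _ _ ha hab hb ↦
    (hG.mono (Icc_subset_Ico ha hb)).intervalIntegrable_of_Icc hab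
  have hgap : ∀ {a b : ℝ}, 0 ≤ a → a ≤ b → b < 1 →
      IntervalIntegrable (fun t ↦ G₂ t - G₁ t) volume a b := fun ha hab hb ↦
    (hint hG₂ ha hab hb).sub (hint hG₁ ha hab hb)
  set Δ := ∫ t in 0..1/2, (G₂ t - G₁ t)
  have hΔ : 0 < Δ := intervalIntegral.intervalIntegral_pos_of_pos_on
    (hgap le_rfl (by norm_num) (by norm_num))
    (fun t ht ↦ sub_pos.2 (hlt t ⟨ht.1.le, by linarith [ht.2]⟩)) (by norm_num)
  suffices h : ∀ θ ∈ Ico (0 : ℝ) 1, ∫ t in 0..θ, G₁ t ≤ T₂ - Δ by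
    linarith [hT₁.2 (forall_mem_image.2 h)]
  intro θ hθ
  set θ' := max θ (1 / 2)
  have hθ' : θ' < 1 := max_lt hθ.2 (by norm_num)
  have hθθ' : θ ≤ θ' := le_max_left _ _
  have hmono₁ : ∫ t in 0..θ, G₁ t ≤ ∫ t in 0..θ', G₁ t :=
    intervalIntegral.integral_mono_interval le_rfl hθ.1 (le_max_left _ _)
      (ae_restrict_of_forall_mem measurableSet_Ioc fun t ht ↦
        hnonneg t ⟨ht.1.le, ht.2.trans_lt hθ'⟩)
      (hint hG₁ le_rfl (hθ.1.trans hθθ') hθ')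
  have hmonoΔ : Δ ≤ ∫ t in 0..θ', (G₂ t - G₁ t) :=
    intervalIntegral.integral_mono_interval le_rfl (by norm_num) (le_max_right _ _)
      (ae_restrict_of_forall_mem measurableSet_Ioc fun t ht ↦
        sub_nonneg.2 (hlt t ⟨ht.1.le, ht.2.trans_lt hθ'⟩).le)
      (hgap le_rfl (hθ.1.trans hθθ') hθ')
  rw [intervalIntegral.integral_sub (hint hG₂ le_rfl (hθ.1.trans hθθ') hθ')
    (hint hG₁ le_rfl (hθ.1.trans hθθ') hθ')] at hmonoΔ
  have hT₂θ' : ∫ t in 0..θ', G₂ t ≤ T₂ :=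
    hT₂.1 ⟨θ', ⟨hθ.1.trans hθθ', hθ'⟩, rfl⟩
  linarith

theorem mul_rpow_neg_half_sq {a : ℝ} (ha : 0 < a) : a * (a ^ (-(1 : ℝ) / 2)) ^ 2 = 1 := by
  rw [← rpow_natCast, ← rpow_mul ha.le]
  norm_num [rpow_neg_one, ha.ne']

def curvatureField (κ lam : ℝ) (p : ℝ × ℝ) : ℝ × ℝ :=
  (p.2, -(lam * p.1 * (1 + κ * p.2 ^ 2) ^ ((3 : ℝ) / 2)))

theorem contDiffOn_curvatureField (κ lam : ℝ) :
    ContDiffOn ℝ 1 (curvatureField κ lam) {p | 0 < 1 + κ * p.2 ^ 2} := by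
  refine contDiffOn_snd.prodMk (ContDiffOn.neg ((contDiffOn_const.mul contDiffOn_fst).mul ?_))
  exact ContDiffOn.rpow_const_of_ne (by fun_prop) fun p hp ↦ ne_of_gt hp

def energy (κ lam : ℝ) (u : ℝ → ℝ) (x : ℝ) : ℝ :=
  (1 + κ * deriv u x ^ 2) ^ (-(1 : ℝ) / 2) - κ * lam / 2 * u x ^ 2

namespace SolODE

variable {κ lam a b : ℝ} {u : ℝ → ℝ}

theorem mono {c d : ℝ} (hu : SolODE κ lam u a b) (hac : a ≤ c) (hdb : d ≤ b) :
    SolODE κ lam u c d := by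
  have h : Icc c d ⊆ Icc a b := Icc_subset_Icc hac hdb
  exact ⟨fun x hx ↦ hu.1 x (h hx), fun x hx ↦ hu.2.1 x (h hx), hu.2.2.1.mono h,
    fun x hx ↦ hu.2.2.2.1 x (h hx), fun x hx ↦ hu.2.2.2.2 x (h hx)⟩

theorem hasDerivAt_phase (hu : SolODE κ lam u a b) {t : ℝ} (ht : t ∈ Icc a b) :
    HasDerivAt (fun s ↦ (u s, deriv u s)) (curvatureField κ lam (u t, deriv u t)) t := by
  refine (hu.1 t ht).hasDerivAt.prodMk ?_
  convert (hu.2.1 t ht).hasDerivAt using 1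
  linarith [hu.2.2.2.2 t ht]

theorem eqOn_of_eq_of_deriv_eq {w : ℝ → ℝ} {t₀ : ℝ} (hu : SolODE κ lam u a b)
    (hw : SolODE κ lam w a b) (ht₀ : t₀ ∈ Icc a b) (h0 : u t₀ = w t₀)
    (h1 : deriv u t₀ = deriv w t₀) :
    EqOn u w (Icc a b) ∧ EqOn (deriv u) (deriv w) (Icc a b) := by
  have h := ODE_solution_unique_of_contDiffOn (isOpen_lt continuous_const (by fun_prop))
    (contDiffOn_curvatureField κ lam) (fun t ht ↦ ⟨hu.hasDerivAt_phase ht, hu.2.2.2.1 t ht⟩)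
    (fun t ht ↦ ⟨hw.hasDerivAt_phase ht, hw.2.2.2.1 t ht⟩) ht₀ (Prod.ext h0 h1)
  exact ⟨fun t ht ↦ congrArg Prod.fst (h ht), fun t ht ↦ congrArg Prod.snd (h ht)⟩

theorem comp_const_sub (hu : SolODE κ lam u a b) (c : ℝ) :
    SolODE κ lam (fun t ↦ u (c - t)) (c - b) (c - a) := by
  have hmem : ∀ x ∈ Icc (c - b) (c - a), c - x ∈ Icc a b := fun x hx ↦
    ⟨by linarith [hx.2], by linarith [hx.1]⟩
  have hd : deriv (fun t ↦ u (c - t)) = fun t ↦ -deriv u (c - t) :=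
    funext fun _ ↦ deriv_comp_const_sub ..
  have hdd : deriv (deriv fun t ↦ u (c - t)) = fun t ↦ deriv (deriv u) (c - t) := by
    simp only [hd, deriv.fun_neg', deriv_comp_const_sub, neg_neg]
  refine ⟨fun x hx ↦ differentiableAt_comp_const_sub.2 (hu.1 _ (hmem x hx)),
    fun x hx ↦ hd ▸ (differentiableAt_comp_const_sub.2 (hu.2.1 _ (hmem x hx))).neg,
    hdd ▸ hu.2.2.1.comp (by fun_prop) hmem, fun x hx ↦ ?_, fun x hx ↦ ?_⟩
  · simpa [hd] using hu.2.2.2.1 _ (hmem x hx)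
  · rw [hdd, hd]
    simpa using hu.2.2.2.2 _ (hmem x hx)

theorem neg_comp_sub_const (hu : SolODE κ lam u a b) (c : ℝ) :
    SolODE κ lam (fun t ↦ -u (t - c)) (a + c) (b + c) := by
  have hmem : ∀ x ∈ Icc (a + c) (b + c), x - c ∈ Icc a b := fun x hx ↦
    ⟨by linarith [hx.1], by linarith [hx.2]⟩
  have hd : deriv (fun t ↦ -u (t - c)) = fun t ↦ -deriv u (t - c) := by
    simp only [deriv.fun_neg', deriv_comp_sub_const]
  have hdd : deriv (deriv fun t ↦ -u (t - c)) = fun t ↦ -deriv (deriv u) (t - c) := by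
    simp only [hd, deriv.fun_neg', deriv_comp_sub_const]
  refine ⟨fun x hx ↦ (differentiableAt_comp_sub_const.2 (hu.1 _ (hmem x hx))).neg,
    fun x hx ↦ hd ▸ (differentiableAt_comp_sub_const.2 (hu.2.1 _ (hmem x hx))).neg,
    hdd ▸ (hu.2.2.1.comp (by fun_prop) hmem).neg, fun x hx ↦ ?_, fun x hx ↦ ?_⟩
  · simpa [hd] using hu.2.2.2.1 _ (hmem x hx)
  · rw [hdd, hd]
    simp only [even_two, Even.neg_pow]
    linarith [hu.2.2.2.2 _ (hmem x hx)]

theorem hasDerivAt_energy (hu : SolODE κ lam u a b) {x : ℝ} (hx : x ∈ Icc a b) :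
    HasDerivAt (energy κ lam u) 0 x := by
  have hB := hu.2.2.2.1 x hx
  have hu'' : deriv (deriv u) x = -(lam * u x * (1 + κ * deriv u x ^ 2) ^ ((3 : ℝ) / 2)) := by
    linarith [hu.2.2.2.2 x hx]
  have h : HasDerivAt (energy κ lam u)
      (κ * (2 * deriv u x * deriv (deriv u) x) * (-(1 : ℝ) / 2) *
          (1 + κ * deriv u x ^ 2) ^ (-(1 : ℝ) / 2 - 1) -
        κ * lam / 2 * (2 * u x * deriv u x)) x := by
    have hv := (hu.2.1 x hx).hasDerivAt
    have hw := (hu.1 x hx).hasDerivAt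
    refine HasDerivAt.sub (HasDerivAt.rpow_const ?_ (Or.inl hB.ne')) ?_
    · simpa using ((hv.fun_pow 2).const_mul κ).const_add 1
    · simpa using (hw.fun_pow 2).const_mul (κ * lam / 2)
  refine h.congr_deriv ?_
  rw [hu'']
  -- the `(3/2)`-power from the equation cancels the `(-3/2)`-power from differentiating
  have hcancel : (1 + κ * deriv u x ^ 2) ^ ((3 : ℝ) / 2) *
      (1 + κ * deriv u x ^ 2) ^ (-(1 : ℝ) / 2 - 1) = 1 := by
    rw [← rpow_add hB]; norm_num
  linear_combination (κ * lam * u x * deriv u x) * hcancel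

theorem energy_eq (hu : SolODE κ lam u a b) :
    ∀ x ∈ Icc a b, energy κ lam u x = energy κ lam u a :=
  constant_of_has_deriv_right_zero
    (fun _ hx ↦ (hu.hasDerivAt_energy hx).continuousAt.continuousWithinAt)
    fun _ hx ↦ (hu.hasDerivAt_energy (Ico_subset_Icc_self hx)).hasDerivWithinAt

end SolODE

/-- `dx/dθ = ξ / u'` along the rising quarter arch of a solution with energy `C` and maximum `ξ`,
written in the variable `θ = u / ξ` (see `mul_timeDensity_eq`). -/
def timeDensity (lam C θ : ℝ) : ℝ :=
  √(2 * (1 + (C - 1) * (1 - θ ^ 2)) ^ 2 / (lam * (1 - θ ^ 2) * (2 + (C - 1) * (1 - θ ^ 2))))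

section timeDensity

variable {lam C θ : ℝ}

theorem timeDensity_denom_pos (hlam : 0 < lam) (hC : 1 < C) (hθ : θ ∈ Ico 0 1) :
    0 < lam * (1 - θ ^ 2) * (2 + (C - 1) * (1 - θ ^ 2)) := by
  have h : 0 < 1 - θ ^ 2 := by nlinarith [hθ.1, hθ.2]
  have : 0 < (C - 1) * (1 - θ ^ 2) := mul_pos (by linarith) h
  positivity

theorem continuousOn_timeDensity (hlam : 0 < lam) (hC : 1 < C) :
    ContinuousOn (timeDensity lam C) (Ico 0 1) :=
  ((continuousOn_const.mul (by fun_prop)).div (by fun_prop)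
    fun _ hθ ↦ (timeDensity_denom_pos hlam hC hθ).ne').sqrt

theorem timeDensity_lt_timeDensity {C' : ℝ} (hlam : 0 < lam) (hC : 1 < C) (hCC' : C < C')
    (hθ : θ ∈ Ico 0 1) : timeDensity lam C θ < timeDensity lam C' θ := by
  have ha : 0 < 1 - θ ^ 2 := by nlinarith [hθ.1, hθ.2]
  have hd := timeDensity_denom_pos hlam hC hθ
  have hd' := timeDensity_denom_pos hlam (hC.trans hCC') hθ
  set s := (C - 1) * (1 - θ ^ 2)
  set s' := (C' - 1) * (1 - θ ^ 2)
  have hs : 0 < s := mul_pos (by linarith) ha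
  have hss' : s < s' := mul_lt_mul_of_pos_right (by linarith) ha
  refine sqrt_lt_sqrt (by positivity) ((div_lt_div_iff₀ hd hd').2 ?_)
  -- `s ↦ (1 + s)² / (2 + s)` is increasing on `s > 0`
  have key : (1 + s') ^ 2 * (2 + s) - (1 + s) ^ 2 * (2 + s') =
      (s' - s) * (3 + 2 * (s + s') + s * s') := by ring
  have hfac : 0 < 3 + 2 * (s + s') + s * s' := by nlinarith
  nlinarith [mul_pos (mul_pos hlam ha) (mul_pos (sub_pos.2 hss') hfac)]

theorem mul_timeDensity_eq {κ v w ξ : ℝ} (hκ : κ ≠ 0) (hlam : 0 < lam) (hv : 0 < v)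
    (hξ : 0 < ξ) (hB : 0 < 1 + κ * v ^ 2)
    (hE : (1 + κ * v ^ 2) ^ (-(1 : ℝ) / 2) - κ * lam / 2 * w ^ 2 = C)
    (hξC : C = 1 - κ * lam / 2 * ξ ^ 2) : v * timeDensity lam C (w / ξ) = ξ := by
  set θ := w / ξ
  set s := (C - 1) * (1 - θ ^ 2)
  have hs : (1 + κ * v ^ 2) ^ (-(1 : ℝ) / 2) = 1 + s := by
    rw [show w = ξ * θ from (mul_div_cancel₀ w hξ.ne').symm] at hE
    linear_combination hE + θ ^ 2 * hξC
  have hsq : (1 + κ * v ^ 2) * (1 + s) ^ 2 = 1 := by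
    rw [← hs, mul_rpow_neg_half_sq hB]
  have hκv : κ * v ^ 2 ≠ 0 := mul_ne_zero hκ (pow_ne_zero 2 hv.ne')
  have hs0 : s ≠ 0 := fun h ↦ hκv (by rw [h] at hsq; linarith)
  have h2s : 2 + s ≠ 0 := fun h ↦ hκv (by rw [show s = -2 by linarith] at hsq; linarith)
  have hθ : 1 - θ ^ 2 ≠ 0 := fun h ↦ hs0 (by simp [s, h])
  have hsdef : s = (C - 1) * (1 - θ ^ 2) := rfl
  clear_value θ s
  unfold timeDensity
  rw [← hsdef, ← sqrt_sq hv.le, ← sqrt_mul (sq_nonneg v), ← sqrt_sq hξ.le]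
  congr 1
  field_simp
  refine mul_left_cancel₀ hκ ?_
  linear_combination 2 * hsq - 2 * (1 - θ ^ 2) * (2 + s) * hξC - 2 * (2 + s) * hsdef

theorem lt_of_isLUB_integral_timeDensity {C' T T' : ℝ} (hlam : 0 < lam) (hC : 1 < C)
    (hCC' : C < C') (hT : IsLUB ((fun θ ↦ ∫ t in 0..θ, timeDensity lam C t) '' Ico 0 1) T)
    (hT' : IsLUB ((fun θ ↦ ∫ t in 0..θ, timeDensity lam C' t) '' Ico 0 1) T') : T < T' :=
  lt_of_isLUB_integral (continuousOn_timeDensity hlam hC)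
    (continuousOn_timeDensity hlam (hC.trans hCC')) (fun _ _ ↦ sqrt_nonneg _)
    (fun _ hθ ↦ timeDensity_lt_timeDensity hlam hC hCC' hθ) hT hT'

theorem eq_of_isLUB_integral_timeDensity {C' T : ℝ} (hlam : 0 < lam) (hC : 1 < C)
    (hC' : 1 < C') (hT : IsLUB ((fun θ ↦ ∫ t in 0..θ, timeDensity lam C t) '' Ico 0 1) T)
    (hT' : IsLUB ((fun θ ↦ ∫ t in 0..θ, timeDensity lam C' t) '' Ico 0 1) T) : C = C' :=
  le_antisymm (not_lt.1 fun h ↦ (lt_of_isLUB_integral_timeDensity hlam hC' h hT' hT).false)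
    (not_lt.1 fun h ↦ (lt_of_isLUB_integral_timeDensity hlam hC h hT hT').false)

end timeDensity

namespace SolP

variable {κ lam : ℝ} {u : ℝ → ℝ}

theorem continuousOn (hu : SolP κ lam u) : ContinuousOn u (Icc 0 1) :=
  fun x hx ↦ (hu.1.1 x hx).continuousAt.continuousWithinAt

theorem exists_first_critical (hu : SolP κ lam u) (hc : 0 < deriv u 0) :
    ∃ T ∈ Ioc 0 1, deriv u T = 0 ∧ (∀ x ∈ Ico 0 T, 0 < deriv u x) ∧
      StrictMonoOn u (Icc 0 T) := by
  have hcont' : ContinuousOn (deriv u) (Icc 0 1) :=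
    fun x hx ↦ (hu.1.2.1 x hx).continuousAt.continuousWithinAt
  obtain ⟨T, hT, hT0, hpos⟩ := exists_first_zero hcont' hc <| by
    by_contra! h
    have := strictMonoOn_of_deriv_pos (convex_Icc 0 1) hu.continuousOn
      fun x hx ↦ h x (interior_subset hx)
    exact (this ⟨le_rfl, zero_le_one⟩ ⟨zero_le_one, le_rfl⟩ zero_lt_one).ne
      (hu.2.1.trans hu.2.2.symm)
  refine ⟨T, hT, hT0, hpos, strictMonoOn_of_deriv_pos (convex_Icc 0 T)
    (hu.continuousOn.mono (Icc_subset_Icc_right hT.2)) fun x hx ↦ hpos x ?_⟩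
  rw [interior_Icc] at hx
  exact Ioo_subset_Ico_self hx

theorem half_period (hu : SolP κ lam u) {T : ℝ} (hT : T ∈ Ioc 0 1) (hT0 : deriv u T = 0)
    (hmono : StrictMonoOn u (Icc 0 T)) :
    2 * T ≤ 1 ∧ (∀ x ∈ Ioo 0 (2 * T), 0 < u x) ∧ u (2 * T) = 0 ∧
      deriv u (2 * T) = -deriv u 0 := by
  have hupos : ∀ x ∈ Ioc 0 T, 0 < u x := fun x hx ↦
    hu.2.1 ▸ hmono ⟨le_rfl, hT.1.le⟩ ⟨hx.1.le, hx.2⟩ hx.1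
  obtain ⟨hsym, hsym'⟩ :=
    (hu.1.mono (le_max_left 0 (2 * T - 1)) (min_le_left 1 (2 * T))).eqOn_of_eq_of_deriv_eq
    ((hu.1.comp_const_sub (2 * T)).mono (le_max_right _ _) (by simp))
    ⟨max_le hT.1.le (by linarith [hT.2]), le_min hT.2 (by linarith [hT.1])⟩
    (by ring_nf) (by rw [deriv_comp_const_sub]; ring_nf; rw [hT0, neg_zero])
  have h2T : 2 * T ≤ 1 := by
    -- otherwise the reflection sends the zero `1` to `2T - 1 ∈ (0, T]`, where `u > 0`
    by_contra! h
    have hx : 2 * T - 1 ∈ Icc (max 0 (2 * T - 1)) (min 1 (2 * T)) :=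
      ⟨max_le (by linarith) le_rfl, le_min (by linarith [hT.2]) (by linarith)⟩
    have := hsym hx
    simp only [sub_sub_cancel, hu.2.2] at this
    exact (hupos _ ⟨by linarith, by linarith [hT.2]⟩).ne' this
  rw [max_eq_left (by linarith), min_eq_right h2T] at hsym hsym'
  have h0 : (0 : ℝ) ∈ Icc 0 (2 * T) := ⟨le_rfl, by linarith [hT.1]⟩
  refine ⟨h2T, fun x hx ↦ ?_, by simpa [hu.2.1] using (hsym h0).symm, ?_⟩
  · rcases le_or_gt x T with hxT | hxT
    · exact hupos x ⟨hx.1, hxT⟩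
    · rw [hsym (Ioo_subset_Icc_self hx)]
      exact hupos _ ⟨by linarith [hx.2], by linarith⟩
  · have := hsym' h0
    rw [deriv_comp_const_sub, sub_zero] at this
    linarith

theorem antiperiodic (hu : SolP κ lam u) {P : ℝ} (hP : P ∈ Icc 0 1) (hPu : u P = 0)
    (hPu' : deriv u P = -deriv u 0) : ∀ x ∈ Icc P 1, u x = -u (x - P) :=
  ((hu.1.mono hP.1 le_rfl).eqOn_of_eq_of_deriv_eq
    ((hu.1.neg_comp_sub_const P).mono (by linarith) (by linarith [hP.1])) ⟨le_rfl, hP.2⟩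
    (by simp [hPu, hu.2.1]) (by simp [deriv_comp_sub_const, hPu'])).1

theorem exists_quarter_period (hu : SolP κ lam u) (hc : 0 < deriv u 0) :
    ∃ T ∈ Ioc 0 1, T = 1 / (2 * (({x ∈ Ioo (0 : ℝ) 1 | u x = 0}.ncard : ℝ) + 1)) ∧
      deriv u T = 0 ∧ (∀ x ∈ Ico 0 T, 0 < deriv u x) ∧ StrictMonoOn u (Icc 0 T) := by
  obtain ⟨T, hT, hT0, hpos, hmono⟩ := hu.exists_first_critical hc
  obtain ⟨h2T, hupos, hu2T, hu2T'⟩ := hu.half_period hT hT0 hmono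
  have hP := antiperiod_eq_one_div_ncard_zeros_add_one (by linarith [hT.1]) hu.2.1 hu.2.2 hupos
    (hu.antiperiodic ⟨by linarith [hT.1], h2T⟩ hu2T hu2T')
  refine ⟨T, hT, ?_, hT0, hpos, hmono⟩
  have hN : (0 : ℝ) < ({x ∈ Ioo (0 : ℝ) 1 | u x = 0}.ncard : ℝ) + 1 := by positivity
  field_simp at hP ⊢
  linarith

theorem isLUB_integral_timeDensity (hκ : κ < 0) (hlam : 0 < lam) (hu : SolP κ lam u)
    (hc : 0 < deriv u 0) :
    1 < energy κ lam u 0 ∧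
      IsLUB ((fun θ ↦ ∫ t in 0..θ, timeDensity lam (energy κ lam u 0) t) '' Ico 0 1)
        (1 / (2 * (({x ∈ Ioo (0 : ℝ) 1 | u x = 0}.ncard : ℝ) + 1))) := by
  obtain ⟨T, hT, hTN, hT0, hpos, hmono⟩ := hu.exists_quarter_period hc
  rw [← hTN]
  have hsub : Icc 0 T ⊆ Icc 0 1 := Icc_subset_Icc_right hT.2
  set ξ := u T
  have hξ : 0 < ξ := hu.2.1 ▸ hmono ⟨le_rfl, hT.1.le⟩ ⟨hT.1.le, le_rfl⟩ hT.1
  set C := energy κ lam u 0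
  have hE := hu.1.energy_eq
  have hξC : C = 1 - κ * lam / 2 * ξ ^ 2 :=
    (hE T (hsub ⟨hT.1.le, le_rfl⟩)).symm.trans (by simp [energy, hT0, ξ])
  have hC : 1 < C := by
    have := mul_pos (mul_pos (neg_pos.2 hκ) hlam) (pow_pos hξ 2)
    linarith
  refine ⟨hC, isLUB_integral_of_comp_mul_deriv_eq_one (φ := fun x ↦ u x / ξ)
    (φ' := fun x ↦ deriv u x / ξ) hT.1
    (fun x hx ↦ (hu.1.1 x (hsub hx)).hasDerivAt.div_const ξ)
    ?_ (fun x hx y hy hxy ↦ div_lt_div_of_pos_right (hmono hx hy hxy) hξ) (by simp [hu.2.1])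
    (div_self hξ.ne') (continuousOn_timeDensity hlam hC) fun x hx ↦ ?_⟩
  · exact (show ContinuousOn (deriv u) (Icc 0 T) from
      fun x hx ↦ (hu.1.2.1 x (hsub hx)).continuousAt.continuousWithinAt).div_const ξ
  · have hx' := hsub (Ico_subset_Icc_self hx)
    rw [mul_div_assoc', mul_comm (timeDensity _ _ _), div_eq_one_iff_eq hξ.ne']
    exact mul_timeDensity_eq hκ.ne hlam (hpos x hx) hξ (hu.1.2.2.2.1 x hx') (hE x hx') hξC

theorem deriv_eq_of_energy_eq {w : ℝ → ℝ} (hκ : κ ≠ 0) (hu : SolP κ lam u)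
    (hw : SolP κ lam w) (hu0 : 0 < deriv u 0) (hw0 : 0 < deriv w 0)
    (h : energy κ lam u 0 = energy κ lam w 0) :
    deriv u 0 = deriv w 0 := by
  have h0 : (0 : ℝ) ∈ Icc 0 1 := ⟨le_rfl, zero_le_one⟩
  simp only [energy, hu.2.1, hw.2.1, ne_eq, OfNat.ofNat_ne_zero, not_false_eq_true,
    zero_pow, mul_zero, sub_zero] at h
  have hB := rpow_left_injOn (by norm_num) (hu.1.2.2.2.1 0 h0).le (hw.1.2.2.2.1 0 h0).le h
  exact (pow_left_inj₀ hu0.le hw0.le two_ne_zero).1 (mul_left_cancel₀ hκ (add_left_cancel hB))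

end SolP

theorem SPlus.deriv_pos {κ lam : ℝ} {n : ℕ} {u : ℝ → ℝ} (hu : SPlus κ lam n u) :
    0 < deriv u 0 := by
  obtain ⟨⟨hsol, h0, -⟩, -, -, hsimple, δ, hδ, hpos⟩ := hu
  have h0mem : (0 : ℝ) ∈ Icc 0 1 := ⟨le_rfl, zero_le_one⟩
  refine lt_of_le_of_ne ((hsol.1 0 h0mem).hasDerivAt.nonneg_of_eventually_le ?_)
    (hsimple 0 h0mem h0).symm
  filter_upwards [Ioo_mem_nhdsGT hδ] with x hx
  rw [h0]
  exact (hpos x hx).le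

theorem stmt12_general (κ lam : ℝ) (hκ : κ < 0) (hlam : 0 < lam) (n : ℕ)
    (u₁ u₂ : ℝ → ℝ) (hu₁ : SPlus κ lam n u₁) (hu₂ : SPlus κ lam n u₂) :
    ∀ x ∈ Set.Icc (0 : ℝ) 1, u₁ x = u₂ x := by
  obtain ⟨hC₁, hT₁⟩ := hu₁.1.isLUB_integral_timeDensity hκ hlam hu₁.deriv_pos
  obtain ⟨hC₂, hT₂⟩ := hu₂.1.isLUB_integral_timeDensity hκ hlam hu₂.deriv_pos
  rw [hu₁.2.2.1] at hT₁
  rw [hu₂.2.2.1] at hT₂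
  have hslope := hu₁.1.deriv_eq_of_energy_eq hκ.ne hu₂.1 hu₁.deriv_pos hu₂.deriv_pos
    (eq_of_isLUB_integral_timeDensity hlam hC₁ hC₂ hT₁ hT₂)
  exact (hu₁.1.1.eqOn_of_eq_of_deriv_eq hu₂.1.1 ⟨le_rfl, zero_le_one⟩
    (hu₁.1.2.1.trans hu₂.1.2.1.symm) hslope).1

theorem stmt12 (κ lam : ℝ) (hκ : κ < 0) (hlam : 0 < lam) (n : ℕ) (hn : 1 ≤ n)
    (u₁ u₂ : ℝ → ℝ) (hu₁ : SPlus κ lam n u₁) (hu₂ : SPlus κ lam n u₂) :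
    ∀ x ∈ Set.Icc (0 : ℝ) 1, u₁ x = u₂ x :=
  stmt12_general κ lam hκ hlam n u₁ u₂ hu₁ hu₂
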